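/- arXiv:2301.11860 — 2 statements merged into one kernel-verified Lean document; each statement's English description precedes it below -/
import Mathlib

section
/- For every thin groupoid A, the identity span on A, i.e. the prestrategy (A, ⟨id_A, id_A⟩ : A ⥤ A × A) from A to A, belongs to T_{A⊸A}. -/
open CategoryTheory

universe u

namespace ThinSpan

variable {S T B : Type u} [Groupoid.{u} S] [Groupoid.{u} T] [Groupoid.{u} B]

/-- The (strict) pullback groupoid of a cospan of groupoids: objects are pairs
`(s, t)` with `f.obj s = g.obj t`. -/
structure PB (f : S ⥤ B) (g : T ⥤ B) : Type u where
  s : S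
  t : T
  eq : f.obj s = g.obj t

namespace PB

variable {f : S ⥤ B} {g : T ⥤ B}

/-- Morphisms of the pullback groupoid: pairs `(φ, ψ)` with `f.map φ = g.map ψ`
(modulo the identifications of the endpoints). -/
@[ext]
structure Hom (x y : PB f g) : Type u where
  l : x.s ⟶ y.s
  r : x.t ⟶ y.t
  comm : f.map l ≫ eqToHom y.eq = eqToHom x.eq ≫ g.map r

instance category : Category.{u} (PB f g) where
  Hom := Hom
  id x := ⟨𝟙 x.s, 𝟙 x.t, by simp⟩
  comp u v := ⟨u.l ≫ v.l, u.r ≫ v.r, by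
    rw [Functor.map_comp, Functor.map_comp, Category.assoc, v.comm, ← Category.assoc,
      u.comm, Category.assoc]⟩
  id_comp u := by apply Hom.ext <;> simp
  comp_id u := by apply Hom.ext <;> simp
  assoc u v w := by apply Hom.ext <;> simp

@[simp] theorem id_l (x : PB f g) : (𝟙 x : Hom x x).l = 𝟙 x.s := rfl
@[simp] theorem id_r (x : PB f g) : (𝟙 x : Hom x x).r = 𝟙 x.t := rfl
@[simp] theorem comp_l {x y z : PB f g} (u : x ⟶ y) (v : y ⟶ z) :
    (u ≫ v : Hom x z).l = u.l ≫ v.l := rfl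
@[simp] theorem comp_r {x y z : PB f g} (u : x ⟶ y) (v : y ⟶ z) :
    (u ≫ v : Hom x z).r = u.r ≫ v.r := rfl

instance groupoid : Groupoid.{u} (PB f g) where
  inv u := ⟨Groupoid.inv u.l, Groupoid.inv u.r, by
    rw [Groupoid.inv_eq_inv, Groupoid.inv_eq_inv, Functor.map_inv, Functor.map_inv,
      IsIso.inv_comp_eq, ← Category.assoc, IsIso.eq_comp_inv]
    exact u.comm.symm⟩
  inv_comp u := by apply Hom.ext <;> simp [Groupoid.inv_eq_inv]
  comp_inv u := by apply Hom.ext <;> simp [Groupoid.inv_eq_inv]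

/-- First projection of the pullback groupoid. -/
def pl (f : S ⥤ B) (g : T ⥤ B) : PB f g ⥤ S where
  obj x := x.s
  map u := u.l

/-- Second projection of the pullback groupoid. -/
def pr (f : S ⥤ B) (g : T ⥤ B) : PB f g ⥤ T where
  obj x := x.t
  map u := u.r

end PB

/-- The bipullback condition for a cospan of groupoids: every "reindexing problem"
`θ : f s ⟶ g t` has a solution. -/
def BipullbackCond (f : S ⥤ B) (g : T ⥤ B) : Prop :=
  ∀ (s : S) (t : T) (θ : f.obj s ⟶ g.obj t),
    ∃ (s' : S) (t' : T) (φ : s ⟶ s') (ψ : t' ⟶ t) (e : f.obj s' = g.obj t'),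
      θ = f.map φ ≫ eqToHom e ≫ g.map ψ



/-- A prestrategy on a groupoid `A`: a groupoid together with a display functor to `A`. -/
structure Prestrat (A : Type u) [Groupoid.{u} A] : Type (u + 1) where
  C : Type u
  [grpd : Groupoid.{u} C]
  disp : C ⥤ A

attribute [instance] Prestrat.grpd

variable {A B C : Type u} [Groupoid.{u} A] [Groupoid.{u} B] [Groupoid.{u} C]

/-- Uniform orthogonality of prestrategies: the pullback of the display maps is a
bipullback. -/
def Perp (σ τ : Prestrat A) : Prop :=
  BipullbackCond σ.disp τ.disp

/-- The uniform orthogonal of a set of prestrategies. -/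
def perpSet (Ss : Set (Prestrat A)) : Set (Prestrat A) :=
  {τ | ∀ σ ∈ Ss, Perp σ τ}

/-- The identity prestrategy `(A, id_A)` on `A`. -/
def idPre (A : Type u) [Groupoid.{u} A] : Prestrat A :=
  ⟨A, 𝟭 A⟩

/-- The identity span on `A`, as a prestrategy from `A` to `A`. -/
def idSpan (A : Type u) [Groupoid.{u} A] : Prestrat (A × A) :=
  ⟨A, Functor.prod' (𝟭 A) (𝟭 A)⟩

/-- Product of prestrategies. -/
def prodPre (σ : Prestrat A) (τ : Prestrat B) : Prestrat (A × B) :=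
  ⟨σ.C × τ.C, σ.disp.prod τ.disp⟩

/-- The left display component of a prestrategy from `A` to `B`. -/
def dl (σ : Prestrat (A × B)) : σ.C ⥤ A :=
  σ.disp ⋙ CategoryTheory.Prod.fst A B

/-- The right display component of a prestrategy from `A` to `B`. -/
def dr (σ : Prestrat (A × B)) : σ.C ⥤ B :=
  σ.disp ⋙ CategoryTheory.Prod.snd A B

/-- The set `U_{A ⊸ B}` of uniform prestrategies from `(A, UA)` to `(B, UB)`. -/
def ULin (UA : Set (Prestrat A)) (UB : Set (Prestrat B)) : Set (Prestrat (A × B)) :=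
  {τ | ∀ σ ∈ UA, ∀ υ ∈ perpSet UB, Perp τ (prodPre σ υ)}

/-- The application `T @ S` of a prestrategy `T` from `A` to `B` to a prestrategy `S`
on `A`. -/
def appPre (σ : Prestrat A) (τ : Prestrat (A × B)) : Prestrat B :=
  ⟨PB σ.disp (dl τ), PB.pr σ.disp (dl τ) ⋙ dr τ⟩

/-- The composition `T ⊙ S` of spans/prestrategies. -/
def compPre (σ : Prestrat (A × B)) (τ : Prestrat (B × C)) : Prestrat (A × C) :=
  ⟨PB (dr σ) (dl τ),
    Functor.prod' (PB.pl (dr σ) (dl τ) ⋙ dl σ) (PB.pr (dr σ) (dl τ) ⋙ dr τ)⟩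

/-- A wide subgroupoid of a groupoid `A`: a class of morphisms containing identities and
closed under composition and inverses (with all objects of `A`). -/
structure WideSub (A : Type u) [Groupoid.{u} A] : Type u where
  mem : ∀ {a b : A}, (a ⟶ b) → Prop
  id_mem : ∀ a : A, mem (𝟙 a)
  comp_mem : ∀ {a b c : A} {f : a ⟶ b} {g : b ⟶ c}, mem f → mem g → mem (f ≫ g)
  inv_mem : ∀ {a b : A} {f : a ⟶ b}, mem f → mem (Groupoid.inv f)

namespace WideSub

/-- The underlying type of objects of a wide subgroupoid (the same objects as `A`). -/
@[ext]
structure Obj {A : Type u} [Groupoid.{u} A] (W : WideSub A) : Type u where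
  pt : A

variable {A : Type u} [Groupoid.{u} A] (W : WideSub A)

instance : Groupoid.{u} W.Obj where
  Hom x y := {f : x.pt ⟶ y.pt // W.mem f}
  id x := ⟨𝟙 x.pt, W.id_mem x.pt⟩
  comp u v := ⟨u.1 ≫ v.1, W.comp_mem u.2 v.2⟩
  id_comp u := Subtype.ext (Category.id_comp u.1)
  comp_id u := Subtype.ext (Category.comp_id u.1)
  assoc u v w := Subtype.ext (Category.assoc u.1 v.1 w.1)
  inv u := ⟨Groupoid.inv u.1, W.inv_mem u.2⟩
  inv_comp u := Subtype.ext (Groupoid.inv_comp u.1)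
  comp_inv u := Subtype.ext (Groupoid.comp_inv u.1)

/-- The inclusion functor of a wide subgroupoid. -/
def incl : W.Obj ⥤ A where
  obj x := x.pt
  map u := u.1

/-- The inclusion of a wide subgroupoid, seen as a prestrategy on `A`. -/
def pre : Prestrat A :=
  ⟨W.Obj, W.incl⟩

end WideSub

/-- A groupoid is discrete when all of its morphisms are identities. -/
def IsDiscreteGpd (P : Type u) [Groupoid.{u} P] : Prop :=
  ∀ {x y : P} (u : x ⟶ y), ∃ h : x = y, u = CategoryTheory.eqToHom h

/-- Thin orthogonality: uniform orthogonality together with discreteness of the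
pullback groupoid. -/
def TPerp (σ τ : Prestrat A) : Prop :=
  Perp σ τ ∧ IsDiscreteGpd (PB σ.disp τ.disp)

/-- The thin orthogonal of a class `Ss` of prestrategies, relative to the ambient
uniform structure `U` (so that the result is a subset of `U ⊥`). -/
def tperpSet (U : Set (Prestrat A)) (Ss : Set (Prestrat A)) : Set (Prestrat A) :=
  {τ | τ ∈ perpSet U ∧ ∀ σ ∈ Ss, TPerp σ τ}

/-- The set `T_{A ⊸ B}` of thin prestrategies (strategies) from a thin groupoid
`(A, A₋, A₊, U_A, T_A)` to `(B, B₋, B₊, U_B, T_B)`. -/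
def TLin (UA TA : Set (Prestrat A)) (UB TB : Set (Prestrat B)) :
    Set (Prestrat (A × B)) :=
  {τ | τ ∈ ULin UA UB ∧ ∀ σ ∈ TA, ∀ υ ∈ tperpSet UB TB, TPerp τ (prodPre σ υ)}

end ThinSpan
namespace ThinSpan

section Aux

variable {A B : Type u} [Groupoid.{u} A] [Groupoid.{u} B]

lemma prod_eqToHom_fst' {X Y : A × B} (h : X = Y) :
    (eqToHom h).1 = eqToHom (congrArg Prod.fst h) := by cases h; rfl

lemma prod_eqToHom_snd' {X Y : A × B} (h : X = Y) :
    (eqToHom h).2 = eqToHom (congrArg Prod.snd h) := by cases h; rfl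

lemma PB.obj_ext {S T C : Type u} [Groupoid.{u} S] [Groupoid.{u} T] [Groupoid.{u} C]
    {f : S ⥤ C} {g : T ⥤ C} {p q : PB f g}
    (h1 : p.s = q.s) (h2 : p.t = q.t) : p = q := by
  cases p; cases q; cases h1; cases h2; rfl

lemma PB.eqToHom_l {S T C : Type u} [Groupoid.{u} S] [Groupoid.{u} T] [Groupoid.{u} C]
    {f : S ⥤ C} {g : T ⥤ C} {p q : PB f g} (h : p = q) :
    (eqToHom h : PB.Hom p q).l = eqToHom (congrArg PB.s h) := by cases h; rfl

lemma PB.eqToHom_r {S T C : Type u} [Groupoid.{u} S] [Groupoid.{u} T] [Groupoid.{u} C]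
    {f : S ⥤ C} {g : T ⥤ C} {p q : PB f g} (h : p = q) :
    (eqToHom h : PB.Hom p q).r = eqToHom (congrArg PB.t h) := by cases h; rfl

lemma perp_idSpan {σ υ : Prestrat A} (h : Perp σ υ) :
    Perp (idSpan A) (prodPre σ υ) := by
  rintro a ⟨x, y⟩ θ
  obtain ⟨x', y', φ, ψ, e, he⟩ := h x y (Groupoid.inv θ.1 ≫ θ.2)
  have e' : ((idSpan A).disp.obj (σ.disp.obj x') : A × A)
      = (prodPre σ υ).disp.obj (x', y') := by
    show (σ.disp.obj x', σ.disp.obj x') = (σ.disp.obj x', υ.disp.obj y')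
    rw [e]
  refine ⟨σ.disp.obj x', (x', y'), θ.1 ≫ σ.disp.map φ, (Groupoid.inv φ, ψ), e', ?_⟩
  have h1 : θ.1 = (θ.1 ≫ σ.disp.map φ) ≫ (eqToHom e').1
      ≫ σ.disp.map (Groupoid.inv φ) := by
    rw [prod_eqToHom_fst']
    show θ.1 = (θ.1 ≫ σ.disp.map φ) ≫ eqToHom (rfl : σ.disp.obj x' = σ.disp.obj x')
      ≫ σ.disp.map (Groupoid.inv φ)
    erw [eqToHom_refl, Category.id_comp, Category.assoc, ← Functor.map_comp, Groupoid.comp_inv,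
      CategoryTheory.Functor.map_id, Category.comp_id]
  have h2 : θ.2 = (θ.1 ≫ σ.disp.map φ) ≫ (eqToHom e').2 ≫ υ.disp.map ψ := by
    rw [prod_eqToHom_snd']
    have : (eqToHom (congrArg Prod.snd e') : σ.disp.obj x' ⟶ υ.disp.obj y')
        = eqToHom e := rfl
    erw [this, Category.assoc, ← he]
    erw [← Category.assoc, Groupoid.comp_inv, Category.id_comp]
  exact Prod.ext h1 h2

lemma tperp_idSpan {σ υ : Prestrat A} (h : TPerp σ υ) :
    TPerp (idSpan A) (prodPre σ υ) := by
  refine ⟨perp_idSpan h.1, ?_⟩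
  intro p q u
  -- component equalities of the object equations
  have p1 : p.s = σ.disp.obj p.t.1 := congrArg Prod.fst p.eq
  have p2 : p.s = υ.disp.obj p.t.2 := congrArg Prod.snd p.eq
  have q1 : q.s = σ.disp.obj q.t.1 := congrArg Prod.fst q.eq
  have q2 : q.s = υ.disp.obj q.t.2 := congrArg Prod.snd q.eq
  -- component equalities of the commuting square
  have c1 : u.l ≫ eqToHom q1 = eqToHom p1 ≫ σ.disp.map u.r.1 := by
    have c : u.l ≫ (eqToHom q.eq).1 = (eqToHom p.eq).1 ≫ σ.disp.map u.r.1 :=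
      congrArg Prod.fst u.comm
    rw [prod_eqToHom_fst', prod_eqToHom_fst'] at c
    exact c
  have c2 : u.l ≫ eqToHom q2 = eqToHom p2 ≫ υ.disp.map u.r.2 := by
    have c : u.l ≫ (eqToHom q.eq).2 = (eqToHom p.eq).2 ≫ υ.disp.map u.r.2 :=
      congrArg Prod.snd u.comm
    rw [prod_eqToHom_snd', prod_eqToHom_snd'] at c
    exact c
  -- the induced morphism in the pullback of σ and υ
  set P : PB σ.disp υ.disp := ⟨p.t.1, p.t.2, p1.symm.trans p2⟩ with hP
  set Q : PB σ.disp υ.disp := ⟨q.t.1, q.t.2, q1.symm.trans q2⟩ with hQ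
  have comm : σ.disp.map u.r.1 ≫ eqToHom Q.eq = eqToHom P.eq ≫ υ.disp.map u.r.2 := by
    have : σ.disp.map u.r.1 = eqToHom p1.symm ≫ u.l ≫ eqToHom q1 := by
      erw [c1, ← Category.assoc, eqToHom_trans, eqToHom_refl, Category.id_comp]
    rw [this]
    show (eqToHom p1.symm ≫ u.l ≫ eqToHom q1) ≫ eqToHom (q1.symm.trans q2)
        = eqToHom (p1.symm.trans p2) ≫ υ.disp.map u.r.2
    erw [Category.assoc, Category.assoc, eqToHom_trans, c2, ← Category.assoc,
      eqToHom_trans]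
  obtain ⟨hPQ, hm⟩ := h.2 (⟨u.r.1, u.r.2, comm⟩ : PB.Hom P Q)
  have hx : p.t.1 = q.t.1 := congrArg PB.s hPQ
  have hy : p.t.2 = q.t.2 := congrArg PB.t hPQ
  have ht : p.t = q.t := Prod.ext hx hy
  have hs : p.s = q.s := p1.trans (by rw [hx]; exact q1.symm)
  have hpq : p = q := PB.obj_ext hs ht
  refine ⟨hpq, ?_⟩
  have hr1 : u.r.1 = eqToHom hx := by
    have c : u.r.1 = (eqToHom hPQ : PB.Hom P Q).l := congrArg PB.Hom.l hm
    rw [PB.eqToHom_l] at c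
    exact c
  have hr2 : u.r.2 = eqToHom hy := by
    have c : u.r.2 = (eqToHom hPQ : PB.Hom P Q).r := congrArg PB.Hom.r hm
    rw [PB.eqToHom_r] at c
    exact c
  apply PB.Hom.ext
  · rw [PB.eqToHom_l]
    have : u.l = eqToHom p1 ≫ σ.disp.map u.r.1 ≫ eqToHom q1.symm := by
      erw [← Category.assoc, ← c1, Category.assoc, eqToHom_trans, eqToHom_refl, Category.comp_id]
    erw [this, hr1, eqToHom_map, eqToHom_trans, eqToHom_trans]
  · rw [PB.eqToHom_r]
    refine Prod.ext ?_ ?_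
    · erw [hr1, prod_eqToHom_fst']
    · erw [hr2, prod_eqToHom_snd']

end Aux

/-- The identity span on a thin groupoid is a thin strategy from `A` to `A`. -/
theorem idSpan_thin
    {A : Type u} [Groupoid.{u} A]
    (Aneg Apos : WideSub A) (UA TA : Set (Prestrat A))
    (hUA : perpSet (perpSet UA) = UA) (hTU : TA ⊆ UA)
    (hTA : tperpSet (perpSet UA) (tperpSet UA TA) = TA)
    (hneg : Aneg.pre ∈ TA) (hpos : Apos.pre ∈ tperpSet UA TA) :
    idSpan A ∈ TLin UA TA UA TA := by
  constructor
  · intro σ hσ υ hυ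
    exact perp_idSpan (hυ σ hσ)
  · intro σ hσ υ hυ
    exact tperp_idSpan (hυ.2 σ hσ)

end ThinSpan
end

section
/- Let f : S ⥤ B and g : T ⥤ B be functors between groupoids. Then: (1) the canonical comparison functor Fam(S ×_B T) ⥤ Fam(S) ×_{Fam(B)} Fam(T), sending a family of pairs ((s_i, t_i))_{i∈I} to the pair of families ((s_i)_{i∈I}, (t_i)_{i∈I}) (and acting analogously on morphisms), is an isomorphism of groupoids, i.e. bijective on objects and on morphisms — so Fam preserves pullbacks; (2) if the cospan (f, g) satisfies the bipullback condition, then so does the cospan (Fam(f), Fam(g)). -/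
open CategoryTheory

universe u

namespace ThinSpan

variable {S T B : Type u} [Groupoid.{u} S] [Groupoid.{u} T] [Groupoid.{u} B]

variable {A B C : Type u} [Groupoid.{u} A] [Groupoid.{u} B] [Groupoid.{u} C]

/-- An object of `Fam(A)`: a family of objects of `A` indexed by a finite subset of `ℕ`. -/
structure FamObj (A : Type u) [Groupoid.{u} A] : Type u where
  I : Finset ℕ
  val : {i // i ∈ I} → A

variable {A B : Type u} [Groupoid.{u} A] [Groupoid.{u} B]

/-- A morphism of `Fam(A)`: a bijection of index sets together with a family of
morphisms of `A`. -/
structure FamHom (x y : FamObj A) : Type u where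
  π : {i // i ∈ x.I} ≃ {j // j ∈ y.I}
  f : ∀ i : {i // i ∈ x.I}, x.val i ⟶ y.val (π i)

theorem FamHom.ext' {x y : FamObj A} {u v : FamHom x y} (hπ : u.π = v.π)
    (hf : HEq u.f v.f) : u = v := by
  cases u; cases v; cases hπ; cases hf; rfl

instance : Category.{u} (FamObj A) where
  Hom := FamHom
  id x := ⟨Equiv.refl _, fun i => 𝟙 (x.val i)⟩
  comp u v := ⟨u.π.trans v.π, fun i => u.f i ≫ v.f (u.π i)⟩
  id_comp u := FamHom.ext' (Equiv.refl_trans u.π)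
    (heq_of_eq (funext fun i => Category.id_comp (u.f i)))
  comp_id u := FamHom.ext' (Equiv.trans_refl u.π)
    (heq_of_eq (funext fun i => Category.comp_id (u.f i)))
  assoc u v w := FamHom.ext' (Equiv.trans_assoc u.π v.π w.π)
    (heq_of_eq (funext fun i => Category.assoc (u.f i) _ _))

@[simp] theorem FamHom.id_π (x : FamObj A) : (𝟙 x : FamHom x x).π = Equiv.refl _ := rfl
@[simp] theorem FamHom.id_f (x : FamObj A) (i) : (𝟙 x : FamHom x x).f i = 𝟙 (x.val i) := rfl
@[simp] theorem FamHom.comp_π {x y z : FamObj A} (u : x ⟶ y) (v : y ⟶ z) :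
    (u ≫ v : FamHom x z).π = u.π.trans v.π := rfl
@[simp] theorem FamHom.comp_f {x y z : FamObj A} (u : x ⟶ y) (v : y ⟶ z) (i) :
    (u ≫ v : FamHom x z).f i = u.f i ≫ v.f (u.π i) := rfl

theorem FamHom.ext'' {x y : FamObj A} {u v : FamHom x y} (hπ : ∀ i, u.π i = v.π i)
    (hf : ∀ i, u.f i ≫ eqToHom (congrArg y.val (hπ i)) = v.f i) : u = v := by
  obtain ⟨π₁, f₁⟩ := u
  obtain ⟨π₂, f₂⟩ := v
  have hπ' : π₁ = π₂ := Equiv.ext hπ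
  subst hπ'
  simp only [eqToHom_refl, Category.comp_id] at hf
  exact FamHom.ext' rfl (heq_of_eq (funext hf))

/-- The inverse of a morphism of `Fam(A)`. -/
def FamHom.inv {x y : FamObj A} (u : FamHom x y) : FamHom y x where
  π := u.π.symm
  f j := eqToHom (congrArg y.val (u.π.apply_symm_apply j).symm) ≫
    Groupoid.inv (u.f (u.π.symm j))

theorem FamHom.inv_comp {x y : FamObj A} (u : x ⟶ y) : FamHom.inv u ≫ u = 𝟙 y := by
  apply FamHom.ext'' (fun j => u.π.apply_symm_apply j)
  intro j
  simp [FamHom.inv, Groupoid.inv_eq_inv]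
  erw [eqToHom_trans] <;> rfl

instance : Groupoid.{u} (FamObj A) :=
  { (inferInstance : Category.{u} (FamObj A)) with
    inv := FamHom.inv
    inv_comp := FamHom.inv_comp
    comp_inv := fun {x y} u => by
      have h1 := FamHom.inv_comp u
      have h2 := FamHom.inv_comp (FamHom.inv u)
      calc u ≫ FamHom.inv u
          = (FamHom.inv (FamHom.inv u) ≫ FamHom.inv u) ≫ u ≫ FamHom.inv u := by
            rw [h2, Category.id_comp]
        _ = FamHom.inv (FamHom.inv u) ≫ (FamHom.inv u ≫ u) ≫ FamHom.inv u := by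
            simp only [Category.assoc]
        _ = FamHom.inv (FamHom.inv u) ≫ FamHom.inv u := by rw [h1, Category.id_comp]
        _ = 𝟙 x := h2 }

/-- The functorial action of `Fam` on a functor of groupoids. -/
def famF (F : A ⥤ B) : FamObj A ⥤ FamObj B where
  obj x := ⟨x.I, fun i => F.obj (x.val i)⟩
  map u := ⟨u.π, fun i => F.map (u.f i)⟩
  map_id x := FamHom.ext' rfl (heq_of_eq (funext fun i => F.map_id _))
  map_comp u v := FamHom.ext' rfl (heq_of_eq (funext fun i => F.map_comp _ _))

/-- A morphism of `Fam(A)` is a pure reindexing when all of its morphism components are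
identities. -/
def IsReindexing {x y : FamObj A} (u : FamHom x y) : Prop :=
  ∀ i, ∃ h : x.val i = y.val (u.π i), u.f i = eqToHom h

end ThinSpan
namespace ThinSpan

section Aux

variable {S T B : Type u} [Groupoid.{u} S] [Groupoid.{u} T] [Groupoid.{u} B]
variable {A : Type u} [Groupoid.{u} A]

theorem PB.obj_ext_s15 {f : S ⥤ B} {g : T ⥤ B} {x y : PB f g}
    (hs : x.s = y.s) (ht : x.t = y.t) : x = y := by
  cases x; cases y; cases hs; cases ht; rfl

theorem FamObj.ext_of {x y : FamObj A} (hI : x.I = y.I)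
    (hv : ∀ (i : ℕ) (hi : i ∈ x.I), x.val ⟨i, hi⟩ = y.val ⟨i, hI ▸ hi⟩) : x = y := by
  cases x; cases y
  dsimp at hI
  subst hI
  congr 1
  funext i
  exact hv i.1 i.2

theorem FamObj.congr_val {x y : FamObj A} (h : x = y) (i : ℕ) (hi : i ∈ x.I) :
    x.val ⟨i, hi⟩ = y.val ⟨i, congrArg FamObj.I h ▸ hi⟩ := by
  subst h; rfl

theorem FamHom.congr {x y : FamObj A} {u v : FamHom x y} (h : u = v) (i) :
    ∃ hπ : u.π i = v.π i, u.f i ≫ eqToHom (congrArg y.val hπ) = v.f i := by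
  subst h; exact ⟨rfl, by simp⟩

theorem famEqToHom_mk {A : Type u} [Groupoid.{u} A] {I : Finset ℕ}
    {v w : {i // i ∈ I} → A} (hvw : v = w) :
    (eqToHom (congrArg (FamObj.mk I) hvw) : FamObj.mk I v ⟶ FamObj.mk I w) =
      ⟨Equiv.refl _, fun i => eqToHom (congrFun hvw i)⟩ := by
  subst hvw; rfl

theorem famEqToHom_eq {A : Type u} [Groupoid.{u} A] {I : Finset ℕ}
    {v w : {i // i ∈ I} → A} (h : FamObj.mk I v = FamObj.mk I w) (hvw : v = w) :
    (eqToHom h : FamObj.mk I v ⟶ FamObj.mk I w) =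
      ⟨Equiv.refl _, fun i => eqToHom (congrFun hvw i)⟩ :=
  famEqToHom_mk hvw

/-- The canonical comparison functor `Fam(S ×_B T) ⥤ Fam S ×_{Fam B} Fam T`. -/
def famPB (f : S ⥤ B) (g : T ⥤ B) : FamObj (PB f g) ⥤ PB (famF f) (famF g) where
  obj x := ⟨⟨x.I, fun i => (x.val i).s⟩, ⟨x.I, fun i => (x.val i).t⟩,
    congrArg (FamObj.mk x.I) (funext fun i => (x.val i).eq)⟩
  map {x y} u := ⟨⟨u.π, fun i => (u.f i).l⟩, ⟨u.π, fun i => (u.f i).r⟩, by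
    erw [famEqToHom_eq _ (funext fun i => (y.val i).eq),
      famEqToHom_eq _ (funext fun i => (x.val i).eq)]
    apply FamHom.ext''
    case hπ => intro i; rfl
    case hf =>
      intro i
      erw [FamHom.comp_f, FamHom.comp_f]
      show (f.map (u.f i).l ≫ eqToHom (y.val (u.π i)).eq) ≫ eqToHom rfl = eqToHom (x.val i).eq ≫ g.map (u.f i).r
      rw [Category.assoc, eqToHom_trans]
      have := (u.f i).comm
      exact this⟩
  map_id x := by apply PB.Hom.ext <;> rfl
  map_comp u v := by apply PB.Hom.ext <;> rfl

end Aux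

/-- `Fam` preserves pullbacks of groupoids (the canonical comparison functor to the
pullback is an isomorphism of groupoids), and preserves the bipullback condition. -/
theorem fam_preserves_pullbacks_and_bipullbacks
    {S T B : Type u} [Groupoid.{u} S] [Groupoid.{u} T] [Groupoid.{u} B]
    (f : S ⥤ B) (g : T ⥤ B) :
    (∃ Φ : FamObj (PB f g) ⥤ PB (famF f) (famF g),
        Φ ⋙ PB.pl (famF f) (famF g) = famF (PB.pl f g) ∧
        Φ ⋙ PB.pr (famF f) (famF g) = famF (PB.pr f g) ∧
        Function.Bijective Φ.obj ∧
        ∀ x y : FamObj (PB f g), Function.Bijective (fun u : x ⟶ y => Φ.map u)) ∧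
    (BipullbackCond f g → BipullbackCond (famF f) (famF g)) := by
  constructor
  · refine ⟨famPB f g, rfl, rfl, ⟨?_, ?_⟩, fun x y => ⟨?_, ?_⟩⟩
    · -- injective on objects
      intro x y h
      have hs := congrArg PB.s h
      have ht := congrArg PB.t h
      have hI := congrArg FamObj.I hs
      refine FamObj.ext_of hI ?_
      intro i hi
      apply PB.obj_ext_s15
      · exact FamObj.congr_val hs i hi
      · exact FamObj.congr_val ht i hi
    · -- surjective on objects
      intro z
      have hI : z.s.I = z.t.I := congrArg FamObj.I z.eq
      refine ⟨⟨z.s.I, fun i => ⟨z.s.val i, z.t.val ⟨i.1, hI ▸ i.2⟩,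
        FamObj.congr_val z.eq i.1 i.2⟩⟩, ?_⟩
      apply PB.obj_ext_s15
      · rfl
      · exact FamObj.ext_of hI (fun i hi => rfl)
    · -- injective on morphisms
      intro u v h
      obtain ⟨πu, fu⟩ := u
      obtain ⟨πv, fv⟩ := v
      have hπ : πu = πv := congrArg FamHom.π (congrArg PB.Hom.l h)
      subst hπ
      have hf : fu = fv := by
        funext i
        apply PB.Hom.ext
        · have := (FamHom.congr (congrArg PB.Hom.l h) i).2
          simpa [famPB] using this
        · have := (FamHom.congr (congrArg PB.Hom.r h) i).2
          simpa [famPB] using this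
      rw [hf]
    · -- surjective on morphisms
      intro w
      have hcomm := w.comm
      erw [famEqToHom_eq _ (funext fun i => (y.val i).eq),
        famEqToHom_eq _ (funext fun i => (x.val i).eq)] at hcomm
      have hππ : ∀ i, w.l.π i = w.r.π i := by
        intro i
        have := (FamHom.congr hcomm i).1
        exact this
      have hcf : ∀ i, (f.map (w.l.f i) ≫ eqToHom ((y.val (w.l.π i)).eq)) ≫
          eqToHom (congrArg (fun j => g.obj (y.val j).t) (hππ i)) =
          eqToHom ((x.val i).eq) ≫ g.map (w.r.f i) := by
        intro i
        have hc := (FamHom.congr hcomm i).2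
        erw [FamHom.comp_f, FamHom.comp_f] at hc
        exact hc
      refine ⟨⟨w.l.π, fun i => ⟨w.l.f i,
        w.r.f i ≫ eqToHom ((congrArg (fun j => (y.val j).t) (hππ i)).symm), ?_⟩⟩, ?_⟩
      · -- commutation for each component
        have := hcf i
        simp only [Category.assoc, eqToHom_trans] at this
        erw [Functor.map_comp, eqToHom_map, ← Category.assoc, ← this, Category.assoc,
          eqToHom_trans]
        erw [eqToHom_trans]
        rfl
      · -- the image is w
        apply PB.Hom.ext
        · rfl
        · refine (FamHom.ext'' hππ ?_)
          intro i
          show (w.r.f i ≫ eqToHom _) ≫ eqToHom _ = w.r.f i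
          erw [Category.assoc, eqToHom_trans, eqToHom_refl, Category.comp_id]
  · -- bipullback condition
    intro hbp x y θ
    choose s' t' φ ψ e hθ using fun i => hbp (x.val i) (y.val (θ.π i)) (θ.f i)
    refine ⟨⟨x.I, s'⟩, ⟨x.I, t'⟩, ⟨Equiv.refl _, φ⟩, ⟨θ.π, ψ⟩,
      congrArg (FamObj.mk x.I) (funext e), ?_⟩
    erw [famEqToHom_eq _ (funext e)]
    apply FamHom.ext''
    case hπ => intro i; rfl
    case hf =>
      intro i
      erw [FamHom.comp_f, FamHom.comp_f]
      erw [eqToHom_refl, Category.comp_id]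
      exact hθ i

end ThinSpan
end
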